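/- Let U be a subgroup of the unit circle {z ∈ ℂ : |z| = 1} with −1 ∈ U and with at least 6 elements. Then R(U) equals the set of all finite integer linear combinations of elements of M(U), i.e., R(U) is the additive subgroup of ℂ generated by the monomials M(U). -/

import Mathlib

/-- The antisymmetric bracket `⟨x,y⟩ = x·conj(y) − conj(x)·y`. -/
noncomputable def sbr (x y : ℂ) : ℂ :=
  x * (starRingEnd ℂ) y - (starRingEnd ℂ) x * y

/-- The intersection point `I_{u,v}(p,q)` of the lines `L_u(p)` and `L_v(q)`. -/
noncomputable def Iop (u v p q : ℂ) : ℂ :=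
  (sbr u p / sbr u v) * v + (sbr v q / sbr v u) * u

/-- `origamiPts U` is the smallest subset of `ℂ` containing `0` and `1` that is
closed under `(p,q) ↦ I_{u,v}(p,q)` for all `u, v ∈ U` with `u ≠ ±v`.  This is `R(U)`. -/
inductive origamiPts (U : Set ℂ) : ℂ → Prop
  | zero : origamiPts U 0
  | one : origamiPts U 1
  | inter {u v : ℂ} (hu : u ∈ U) (hv : v ∈ U) (huv : u ≠ v) (huv' : u ≠ -v)
      {p q : ℂ} (hp : origamiPts U p) (hq : origamiPts U q) :
      origamiPts U (Iop u v p q)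

/-- `origamiMon U` is the smallest subset of `ℂ` containing `1` that is closed under
`p ↦ I_{u,v}(p,0)` for all `u, v ∈ U` with `u ≠ ±v`.  Its elements are the monomials `M(U)`. -/
inductive origamiMon (U : Set ℂ) : ℂ → Prop
  | one : origamiMon U 1
  | step {u v : ℂ} (hu : u ∈ U) (hv : v ∈ U) (huv : u ≠ v) (huv' : u ≠ -v)
      {p : ℂ} (hp : origamiMon U p) : origamiMon U (Iop u v p 0)

/-!
Write `P_{u,v} = Iop u v · 0`; it is the additive projection of `ℂ` onto `ℝ v` along `u`, and
`Iop u v p q = P_{u,v} p + P_{v,u} q`. Since the projections send monomials to monomials, every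
constructible point is an integer combination of monomials.

Conversely, monomials are constructible, and constructible points are closed under addition:
given three pairwise non-parallel directions `u, v, w`, the sum `p + q` is reached by five folds,
because `P_{u,v} ∘ P_{u,w} = P_{u,v}` and `P_{u,v} + P_{v,u} = id`. Monomials are closed under
negation since `P_{u,v}` is additive and `-1` is a monomial: when `a² = b c` for unit `a, b, c`
the fold through `t c` (`t` real) along `a` lands at `-t b`, so for `h ∈ U` with `h⁴ ≠ 1` the folds
`1 ↦ -h² ↦ h⁴ ↦ -1` are available. Six elements of `U` provide both three non-parallel directions
and such an `h`.
-/

open ComplexConjugate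

lemma sbr_swap (x y : ℂ) : sbr y x = -sbr x y := by
  simp only [sbr]; ring

lemma sbr_self (x : ℂ) : sbr x x = 0 := by
  simp only [sbr]; ring

lemma sbr_add_right (a x y : ℂ) : sbr a (x + y) = sbr a x + sbr a y := by
  simp only [sbr, map_add]; ring

lemma sbr_mul_right_of_conj_eq {t : ℂ} (ht : conj t = t) (a x : ℂ) :
    sbr a (t * x) = t * sbr a x := by
  simp only [sbr, map_mul, ht]; ring

lemma conj_sbr_div_sbr (a b c d : ℂ) : conj (sbr a b / sbr c d) = sbr a b / sbr c d := by
  have hconj : ∀ x y, conj (sbr x y) = -sbr x y := fun x y => by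
    simp only [sbr, map_sub, map_mul, Complex.conj_conj]; ring
  rw [map_div₀, hconj, hconj, neg_div_neg_eq]

lemma sbr_of_norm_eq_one {x y : ℂ} (hx : ‖x‖ = 1) (hy : ‖y‖ = 1) : sbr x y = x / y - y / x := by
  rw [sbr, ← Complex.inv_eq_conj hx, ← Complex.inv_eq_conj hy]; ring

lemma sbr_ne_zero {x y : ℂ} (hx : ‖x‖ = 1) (hy : ‖y‖ = 1) (hxy : x ^ 2 ≠ y ^ 2) :
    sbr x y ≠ 0 := by
  have hx0 : x ≠ 0 := ne_zero_of_norm_ne_zero (by simp [hx])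
  have hy0 : y ≠ 0 := ne_zero_of_norm_ne_zero (by simp [hy])
  rw [sbr_of_norm_eq_one hx hy, div_sub_div _ _ hy0 hx0]
  exact div_ne_zero (by rwa [← sq, ← sq, sub_ne_zero]) (mul_ne_zero hy0 hx0)

lemma ne_and_ne_neg_of_sq_ne {x y : ℂ} (h : x ^ 2 ≠ y ^ 2) : x ≠ y ∧ x ≠ -y := by
  rwa [Ne, sq_eq_sq_iff_eq_or_eq_neg, not_or] at h

lemma Iop_zero_right (u v x : ℂ) : Iop u v x 0 = sbr u x / sbr u v * v := by
  simp [Iop, sbr]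

lemma Iop_eq_add (u v p q : ℂ) : Iop u v p q = Iop u v p 0 + Iop v u q 0 := by
  simp only [Iop_zero_right]; rfl

noncomputable def lineProj (u v : ℂ) : ℂ →+ ℂ :=
  AddMonoidHom.mk' (fun x => Iop u v x 0) fun x y => by
    simp only [Iop_zero_right, sbr_add_right, add_div, add_mul]

lemma lineProj_apply (u v x : ℂ) : lineProj u v x = Iop u v x 0 := rfl

lemma Iop_add_zero (u v x y : ℂ) : Iop u v (x + y) 0 = Iop u v x 0 + Iop u v y 0 :=
  map_add (lineProj u v) x y

lemma sbr_Iop_zero_right (u w x : ℂ) : sbr w (Iop u w x 0) = 0 := by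
  rw [Iop_zero_right, sbr_mul_right_of_conj_eq (conj_sbr_div_sbr _ _ _ _), sbr_self, mul_zero]

lemma sbr_left_Iop_zero_right {u w : ℂ} (huw : sbr u w ≠ 0) (x : ℂ) :
    sbr u (Iop u w x 0) = sbr u x := by
  rw [Iop_zero_right, sbr_mul_right_of_conj_eq (conj_sbr_div_sbr _ _ _ _), div_mul_cancel₀ _ huw]

lemma Iop_zero_Iop_zero {u v w : ℂ} (huw : sbr u w ≠ 0) (x : ℂ) :
    Iop u v (Iop u w x 0) 0 = Iop u v x 0 := by
  rw [Iop_zero_right u v, sbr_left_Iop_zero_right huw, ← Iop_zero_right]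

lemma Iop_zero_add_Iop_zero_swap {u v : ℂ} (huv : sbr u v ≠ 0) (x : ℂ) :
    Iop u v x 0 + Iop v u x 0 = x := by
  have key : sbr u x * v - sbr v x * u = sbr u v * x := by simp only [sbr]; ring
  rw [Iop_zero_right, Iop_zero_right, sbr_swap u v, div_neg, neg_mul, ← sub_eq_add_neg,
    div_mul_eq_mul_div, div_mul_eq_mul_div, div_sub_div_same, key, mul_div_cancel_left₀ _ huv]

lemma Iop_zero_of_sbr_eq_zero {u v x : ℂ} (huv : sbr u v ≠ 0) (hx : sbr v x = 0) :
    Iop u v x 0 = x := by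
  simpa [Iop_zero_right v u x, hx] using Iop_zero_add_Iop_zero_swap huv x

lemma Iop_three_directions_eq_add {u v w : ℂ} (huv : sbr u v ≠ 0) (huw : sbr u w ≠ 0)
    (hvw : sbr v w ≠ 0) (p q : ℂ) :
    Iop u v (Iop v w (Iop u w q 0) (Iop u v p 0)) (Iop u w (Iop v w q 0) (Iop v u p 0))
      = p + q := by
  have hvu : sbr v u ≠ 0 := by rwa [sbr_swap, neg_ne_zero]
  have hwu : sbr w u ≠ 0 := by rwa [sbr_swap, neg_ne_zero]
  have hwv : sbr w v ≠ 0 := by rwa [sbr_swap, neg_ne_zero]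
  have hX : Iop v w (Iop u w q 0) (Iop u v p 0) = Iop u w q 0 + Iop u v p 0 := by
    rw [Iop_eq_add, Iop_zero_of_sbr_eq_zero hvw (sbr_Iop_zero_right _ _ _),
      Iop_zero_of_sbr_eq_zero hwv (sbr_Iop_zero_right _ _ _)]
  have hY : Iop u w (Iop v w q 0) (Iop v u p 0) = Iop v w q 0 + Iop v u p 0 := by
    rw [Iop_eq_add, Iop_zero_of_sbr_eq_zero huw (sbr_Iop_zero_right _ _ _),
      Iop_zero_of_sbr_eq_zero hwu (sbr_Iop_zero_right _ _ _)]
  rw [hX, hY, Iop_eq_add, Iop_add_zero, Iop_add_zero, Iop_zero_Iop_zero huw,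
    Iop_zero_Iop_zero huv, Iop_zero_Iop_zero hvw, Iop_zero_Iop_zero hvu]
  linear_combination Iop_zero_add_Iop_zero_swap huv p + Iop_zero_add_Iop_zero_swap huv q

lemma Iop_mul_of_sq_eq_mul {a b c : ℂ} (ha : ‖a‖ = 1) (hb : ‖b‖ = 1) (hc : ‖c‖ = 1)
    (habc : a ^ 2 = b * c) (hab : sbr a b ≠ 0) {t : ℂ} (ht : conj t = t) :
    Iop a b (t * c) 0 = -(t * b) := by
  have hac : sbr a c = -sbr a b := by
    have ha0 : a ≠ 0 := ne_zero_of_norm_ne_zero (by simp [ha])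
    have hb0 : b ≠ 0 := ne_zero_of_norm_ne_zero (by simp [hb])
    have hc0 : c ≠ 0 := ne_zero_of_norm_ne_zero (by simp [hc])
    rw [sbr_of_norm_eq_one ha hb, sbr_of_norm_eq_one ha hc]
    field_simp
    linear_combination (b + c) * habc
  rw [Iop_zero_right, sbr_mul_right_of_conj_eq ht, hac, mul_neg, neg_div, mul_div_assoc,
    div_self hab]
  ring

lemma origamiPts_of_origamiMon {U : Set ℂ} {m : ℂ} (hm : origamiMon U m) : origamiPts U m := by
  induction hm with
  | one => exact origamiPts.one
  | step hu hv huv huv' _ ih => exact origamiPts.inter hu hv huv huv' ih origamiPts.zero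

lemma origamiMon_neg {U : Set ℂ} (hneg : origamiMon U (-1)) {m : ℂ} (hm : origamiMon U m) :
    origamiMon U (-m) := by
  induction hm with
  | one => exact hneg
  | step hu hv huv huv' _ ih =>
    rw [← lineProj_apply, ← map_neg]
    exact origamiMon.step hu hv huv huv' ih

lemma origamiMon_neg_mul_of_sq_eq_mul {U : Set ℂ} (hU : ∀ z ∈ U, ‖z‖ = 1) {a b c t : ℂ}
    (ha : a ∈ U) (hb : b ∈ U) (hc : c ∈ U) (habc : a ^ 2 = b * c) (hab : a ^ 2 ≠ b ^ 2)
    (ht : conj t = t) (hm : origamiMon U (t * c)) : origamiMon U (-(t * b)) := by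
  obtain ⟨hab₁, hab₂⟩ := ne_and_ne_neg_of_sq_ne hab
  rw [← Iop_mul_of_sq_eq_mul (hU a ha) (hU b hb) (hU c hc) habc
    (sbr_ne_zero (hU a ha) (hU b hb) hab) ht]
  exact origamiMon.step ha hb hab₁ hab₂ hm

lemma origamiMon_neg_one {U : Set ℂ} (hU : ∀ z ∈ U, ‖z‖ = 1) (hone : (1 : ℂ) ∈ U)
    (hmul : ∀ a ∈ U, ∀ b ∈ U, a * b ∈ U) {h : ℂ} (hh : h ∈ U) (h4 : h ^ 4 ≠ 1) :
    origamiMon U (-1) := by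
  have hpow : ∀ n, h ^ n ∈ U := fun n => by
    induction n with
    | zero => simpa using hone
    | succ n ih => rw [pow_succ]; exact hmul _ ih _ hh
  have h0 : h ≠ 0 := ne_zero_of_norm_ne_zero (by simp [hU h hh])
  have hsq : h ^ 2 ≠ 1 := fun e => h4 (by rw [show 4 = 2 * 2 from rfl, pow_mul, e, one_pow])
  have hshift : ∀ n, h ^ (2 * n) ≠ h ^ (2 * n + 2) := fun n e => hsq <|
    mul_left_cancel₀ (pow_ne_zero (2 * n) h0) (by rw [mul_one, ← pow_add]; exact e.symm)
  have m1 : origamiMon U (-(1 * h ^ 2)) :=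
    origamiMon_neg_mul_of_sq_eq_mul hU hh (hpow 2) hone (by ring)
      (by simpa [← pow_mul] using hshift 1) (map_one _) (by simpa using origamiMon.one)
  have m2 : origamiMon U (-(-1 * h ^ 4)) :=
    origamiMon_neg_mul_of_sq_eq_mul hU (hpow 3) (hpow 4) (hpow 2) (by ring)
      (by simpa [← pow_mul] using hshift 3) (by simp) (by simpa using m1)
  simpa using origamiMon_neg_mul_of_sq_eq_mul hU (hpow 2) hone (hpow 4) (by ring)
    (by simpa [← pow_mul] using h4) (map_one _) (by simpa using m2)

lemma origamiPts_add {U : Set ℂ} (hU : ∀ z ∈ U, ‖z‖ = 1) {u v w : ℂ} (hu : u ∈ U) (hv : v ∈ U)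
    (hw : w ∈ U) (huv : u ^ 2 ≠ v ^ 2) (huw : u ^ 2 ≠ w ^ 2) (hvw : v ^ 2 ≠ w ^ 2) {p q : ℂ}
    (hp : origamiPts U p) (hq : origamiPts U q) : origamiPts U (p + q) := by
  have fold : ∀ {a b}, a ∈ U → b ∈ U → a ^ 2 ≠ b ^ 2 → ∀ {x y},
      origamiPts U x → origamiPts U y → origamiPts U (Iop a b x y) := fun ha hb hab =>
    origamiPts.inter ha hb (ne_and_ne_neg_of_sq_ne hab).1 (ne_and_ne_neg_of_sq_ne hab).2
  have hX := fold hv hw hvw (fold hu hw huw hq .zero) (fold hu hv huv hp .zero)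
  have hY := fold hu hw huw (fold hv hw hvw hq .zero) (fold hv hu huv.symm hp .zero)
  rw [← Iop_three_directions_eq_add (sbr_ne_zero (hU u hu) (hU v hv) huv)
    (sbr_ne_zero (hU u hu) (hU w hw) huw) (sbr_ne_zero (hU v hv) (hU w hw) hvw) p q]
  exact fold hu hv huv hX hY

lemma closure_origamiMon_subset_origamiPts {U : Set ℂ} (hU : ∀ z ∈ U, ‖z‖ = 1)
    (hneg : origamiMon U (-1)) {u v w : ℂ} (hu : u ∈ U) (hv : v ∈ U) (hw : w ∈ U)
    (huv : u ^ 2 ≠ v ^ 2) (huw : u ^ 2 ≠ w ^ 2) (hvw : v ^ 2 ≠ w ^ 2) {z : ℂ}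
    (hz : z ∈ AddSubgroup.closure {m | origamiMon U m}) : origamiPts U z := by
  induction hz using AddSubgroup.closure_induction'' with
  | mem m hm => exact origamiPts_of_origamiMon hm
  | neg_mem m hm => exact origamiPts_of_origamiMon (origamiMon_neg hneg hm)
  | zero => exact origamiPts.zero
  | add x y _ _ hx hy => exact origamiPts_add hU hu hv hw huv huw hvw hx hy

lemma origamiPts_subset_closure_origamiMon {U : Set ℂ} {z : ℂ} (hz : origamiPts U z) :
    z ∈ AddSubgroup.closure {m | origamiMon U m} := by
  have hproj : ∀ {u v}, u ∈ U → v ∈ U → u ≠ v → u ≠ -v →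
      AddSubgroup.closure {m | origamiMon U m} ≤
        (AddSubgroup.closure {m | origamiMon U m}).comap (lineProj u v) :=
    fun hu hv huv huv' => (AddSubgroup.closure_le _).2 fun _ hm =>
      AddSubgroup.subset_closure (origamiMon.step hu hv huv huv' hm)
  induction hz with
  | zero => exact zero_mem _
  | one => exact AddSubgroup.subset_closure origamiMon.one
  | inter hu hv huv huv' _ _ ihp ihq =>
    rw [Iop_eq_add]
    exact add_mem (hproj hu hv huv huv' ihp)
      (hproj hv hu huv.symm (fun e => huv' (by rw [e, neg_neg])) ihq)

lemma Polynomial.card_nthRootsFinset_le {R : Type*} [CommRing R] [IsDomain R] (n : ℕ) (a : R) :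
    (Polynomial.nthRootsFinset n a).card ≤ n := by
  classical
  rw [Polynomial.nthRootsFinset_def]
  exact (Multiset.toFinset_card_le _).trans (Polynomial.card_nthRoots n a)

lemma Finset.exists_pow_ne_of_card_lt {R : Type*} [CommRing R] [IsDomain R] {s : Finset R}
    {n : ℕ} (hn : 0 < n) (hs : n < s.card) (a : R) : ∃ x ∈ s, x ^ n ≠ a := by
  obtain ⟨x, hx, hxa⟩ := Finset.exists_mem_notMem_of_card_lt_card
    ((Polynomial.card_nthRootsFinset_le n a).trans_lt hs)
  exact ⟨x, hx, fun e => hxa ((Polynomial.mem_nthRootsFinset hn a).2 e)⟩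

lemma Finset.exists_three_sq_ne {R : Type*} [CommRing R] [IsDomain R] [DecidableEq R]
    {s : Finset R} (hs : 6 ≤ s.card) :
    ∃ u ∈ s, ∃ v ∈ s, ∃ w ∈ s, u ^ 2 ≠ v ^ 2 ∧ u ^ 2 ≠ w ^ 2 ∧ v ^ 2 ≠ w ^ 2 := by
  have hfib : ∀ b ∈ s.image (· ^ 2), (s.filter (· ^ 2 = b)).card ≤ 2 := fun b _ =>
    (Finset.card_le_card fun x hx => (Polynomial.mem_nthRootsFinset two_pos b).2
      (Finset.mem_filter.1 hx).2).trans (Polynomial.card_nthRootsFinset_le 2 b)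
  obtain ⟨_, ha, _, hb, _, hc, hab, hac, hbc⟩ :=
    Finset.two_lt_card.1 (show 2 < (s.image (· ^ 2)).card by
      have := Finset.card_le_mul_card_image s 2 hfib; omega)
  obtain ⟨u, hu, rfl⟩ := Finset.mem_image.1 ha
  obtain ⟨v, hv, rfl⟩ := Finset.mem_image.1 hb
  obtain ⟨w, hw, rfl⟩ := Finset.mem_image.1 hc
  exact ⟨u, hu, v, hv, w, hw, hab, hac, hbc⟩

theorem stmt_8_general (U : Set ℂ)
    (hsub : ∀ z ∈ U, ‖z‖ = 1)
    (hone : (1 : ℂ) ∈ U)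
    (hmul : ∀ a ∈ U, ∀ b ∈ U, a * b ∈ U)
    (hcard : ∃ s : Finset ℂ, ↑s ⊆ U ∧ 6 ≤ s.card)
    : {z : ℂ | origamiPts U z} =
      (AddSubgroup.closure {z : ℂ | origamiMon U z} : AddSubgroup ℂ) := by
  classical
  obtain ⟨s, hsU, hs⟩ := hcard
  obtain ⟨h, hh, h4⟩ := Finset.exists_pow_ne_of_card_lt (by norm_num) (by omega : 4 < s.card) 1
  obtain ⟨u, hu, v, hv, w, hw, huv, huw, hvw⟩ := Finset.exists_three_sq_ne hs
  have hneg := origamiMon_neg_one hsub hone hmul (hsU hh) h4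
  ext z
  exact ⟨origamiPts_subset_closure_origamiMon, closure_origamiMon_subset_origamiPts hsub hneg
    (hsU hu) (hsU hv) (hsU hw) huv huw hvw⟩

/-- `R(U)` is the additive subgroup of `ℂ` generated by the monomials `M(U)`,
i.e., the set of finite integer linear combinations of monomials. -/
theorem stmt_8 (U : Set ℂ)
    (hsub : ∀ z ∈ U, ‖z‖ = 1)
    (hone : (1 : ℂ) ∈ U)
    (hmul : ∀ a ∈ U, ∀ b ∈ U, a * b ∈ U)
    (hinv : ∀ a ∈ U, a⁻¹ ∈ U)
    (hneg : (-1 : ℂ) ∈ U)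
    (hcard : ∃ s : Finset ℂ, ↑s ⊆ U ∧ 6 ≤ s.card)
    : {z : ℂ | origamiPts U z} =
      (AddSubgroup.closure {z : ℂ | origamiMon U z} : AddSubgroup ℂ) :=
  stmt_8_general U hsub hone hmul hcard
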